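/- arXiv:2504.21010 — 5 statements merged into one kernel-verified Lean document; each statement's English description precedes it below -/
import Mathlib

section
/- For any finite group G, any finite-dimensional complex representation φ of G, and any g ∈ G, the operator D_g := Σ_{h∈G} x_{g⁻¹h} ∂/∂x_h applied to the polynomial det(Σ_{h∈G} φ(h) x_h) equals χ_φ(g) · det(Σ_{h∈G} φ(h) x_h), where χ_φ is the character of φ. -/
/-!
`D_g` is a derivation of the polynomial ring sending `x_h` to `x_{g⁻¹h}`; applied entrywise to
`X = ∑ φ(h) x_h` it gives `∑ φ(h) x_{g⁻¹h} = φ(g) X`. Jacobi's formula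
`D (det X) = tr (adj X · D X)` then yields `tr (adj X · φ(g) X) = det X · tr φ(g)`.
-/

open MvPolynomial

/-- The Frobenius differential operator `D_g f = ∑_{h ∈ G} x_{g⁻¹ h} ∂f/∂x_h`. -/
noncomputable def Dop {G : Type*} [Group G] [Fintype G] (g : G)
    (f : MvPolynomial G ℂ) : MvPolynomial G ℂ :=
  ∑ h : G, X (g⁻¹ * h) * pderiv h f

/-- The matrix `X = ∑_{h ∈ G} φ(h) x_h` with entries in the polynomial ring. -/
noncomputable def repMatrix {G : Type*} [Group G] [Fintype G] {d : ℕ}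
    (φ : G →* Matrix (Fin d) (Fin d) ℂ) : Matrix (Fin d) (Fin d) (MvPolynomial G ℂ) :=
  ∑ h : G, (X h : MvPolynomial G ℂ) • (φ h).map C

open Finset

namespace Derivation

theorem leibniz_finset_prod {R A M ι : Type*} [CommSemiring R] [CommSemiring A] [Algebra R A]
    [AddCommMonoid M] [Module A M] [Module R M] [DecidableEq ι]
    (D : Derivation R A M) (s : Finset ι) (f : ι → A) :
    D (∏ i ∈ s, f i) = ∑ i ∈ s, (∏ j ∈ s.erase i, f j) • D (f i) := by
  induction s using Finset.induction with
  | empty => simp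
  | @insert a s ha ih =>
    rw [prod_insert ha, leibniz, ih, sum_insert ha, erase_insert ha, smul_sum, add_comm]
    congr 1
    refine sum_congr rfl fun i hi => ?_
    rw [erase_insert_of_ne (ne_of_mem_of_not_mem hi ha).symm,
      prod_insert fun h => ha (mem_of_mem_erase h), mul_smul]

variable {R A n : Type*} [CommSemiring R] [CommRing A] [Algebra R A] [Fintype n] [DecidableEq n]

theorem map_det_eq_sum_det_updateCol (D : Derivation R A A) (M : Matrix n n A) :
    D M.det = ∑ i, (M.updateCol i fun k => D (M k i)).det := by
  simp only [Matrix.det_apply, map_sum]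
  rw [sum_comm]
  refine sum_congr rfl fun σ _ => ?_
  rw [Units.smul_def, map_zsmul, leibniz_finset_prod, smul_sum]
  refine sum_congr rfl fun i _ => ?_
  rw [Units.smul_def, ← mul_prod_erase univ _ (mem_univ i), smul_eq_mul, mul_comm]
  congr 2
  · simp
  · refine prod_congr rfl fun j hj => ?_
    simp [ne_of_mem_erase hj]

theorem map_det (D : Derivation R A A) (M : Matrix n n A) :
    D M.det = (M.adjugate * M.map D).trace := by
  rw [map_det_eq_sum_det_updateCol, Matrix.trace]
  refine sum_congr rfl fun i _ => ?_
  rw [← Matrix.cramer_apply, Matrix.cramer_eq_adjugate_mulVec]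
  simp [Matrix.mulVec, Matrix.mul_apply, dotProduct]

end Derivation

theorem Matrix.trace_adjugate_mul_mul_self {n A : Type*} [Fintype n] [DecidableEq n] [CommRing A]
    (M N : Matrix n n A) : (M.adjugate * (N * M)).trace = M.det * N.trace := by
  rw [← Matrix.mul_assoc, Matrix.trace_mul_cycle, Matrix.mul_adjugate, Matrix.smul_mul,
    Matrix.one_mul, Matrix.trace_smul, smul_eq_mul]

section

variable {G : Type*} [Group G] [Fintype G]

noncomputable def dopDerivation (g : G) : Derivation ℂ (MvPolynomial G ℂ) (MvPolynomial G ℂ) :=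
  ∑ h : G, (X (g⁻¹ * h) : MvPolynomial G ℂ) • pderiv h

theorem dopDerivation_apply (g : G) (f : MvPolynomial G ℂ) : dopDerivation g f = Dop g f := by
  rw [dopDerivation, ← Derivation.coeFnAddMonoidHom_apply, map_sum, Finset.sum_apply, Dop]
  simp only [Derivation.coeFnAddMonoidHom_apply, Derivation.smul_apply, smul_eq_mul]

theorem dopDerivation_X (g h : G) : dopDerivation g (X h) = X (g⁻¹ * h) := by
  classical
  simp [dopDerivation_apply, Dop, pderiv_X, Pi.single_apply]

theorem repMatrix_map_linearMap {d : ℕ} (φ : G →* Matrix (Fin d) (Fin d) ℂ)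
    (L : MvPolynomial G ℂ →ₗ[ℂ] MvPolynomial G ℂ) :
    (repMatrix φ).map L = ∑ h : G, L (X h) • (φ h).map C := by
  ext i j : 1
  simp only [repMatrix, Matrix.map_apply, Matrix.sum_apply, Matrix.smul_apply, smul_eq_mul,
    map_sum]
  refine sum_congr rfl fun h _ => ?_
  rw [mul_comm, C_mul', map_smul, ← C_mul', mul_comm]

theorem repMatrix_map_dopDerivation {d : ℕ} (φ : G →* Matrix (Fin d) (Fin d) ℂ) (g : G) :
    (repMatrix φ).map (dopDerivation g) = (φ g).map C * repMatrix φ := by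
  rw [← Derivation.coeFn_coe, repMatrix_map_linearMap, repMatrix, mul_sum]
  refine Fintype.sum_equiv (Equiv.mulLeft g⁻¹) _ _ fun h => ?_
  simp [dopDerivation_X, ← Matrix.map_mul, ← map_mul]

end

theorem frobenius_Dg_general {G : Type*} [Group G] [Fintype G] {d : ℕ}
    (φ : G →* Matrix (Fin d) (Fin d) ℂ) (g : G) :
    Dop g (repMatrix φ).det = C ((φ g).trace) * (repMatrix φ).det := by
  rw [← dopDerivation_apply, Derivation.map_det, repMatrix_map_dopDerivation,
    Matrix.trace_adjugate_mul_mul_self, AddMonoidHom.map_trace, mul_comm]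

theorem frobenius_Dg {G : Type*} [Group G] [Fintype G] [DecidableEq G] {d : ℕ}
    (φ : G →* Matrix (Fin d) (Fin d) ℂ) (g : G) :
    Dop g (repMatrix φ).det = C ((φ g).trace) * (repMatrix φ).det :=
  frobenius_Dg_general φ g
end

section
/- For any finite group G, any finite-dimensional complex representation φ of G, and any g ∈ G, the operator Δ_g := Σ_{h∈G} x_{hg⁻¹} ∂/∂x_h applied to det(Σ_{h∈G} φ(h) x_h) equals χ_φ(g) · det(Σ_{h∈G} φ(h) x_h). -/
/-!
`Δ_g` is the derivation of `ℂ[x_h : h ∈ G]` sending `x_h` to `x_{hg⁻¹}`. Applied entrywise to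
`X = ∑_h φ(h) x_h` it gives `∑_h φ(h) x_{hg⁻¹} = ∑_h φ(hg) x_h = X φ(g)`. For any derivation `D`
with `D X = X B`, expanding `det` column by column and using multilinearity gives
`D (det X) = tr B · det X`.
-/

open MvPolynomial

/-- The Frobenius differential operator `Δ_g f = ∑_{h ∈ G} x_{h g⁻¹} ∂f/∂x_h`. -/
noncomputable def Delta {G : Type*} [Group G] [Fintype G] (g : G)
    (f : MvPolynomial G ℂ) : MvPolynomial G ℂ :=
  ∑ h : G, X (h * g⁻¹) * pderiv h f

namespace Derivation

variable {R A : Type*} [CommSemiring R] [CommRing A] [Algebra R A] (D : Derivation R A A)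

theorem map_finset_prod {ι : Type*} [DecidableEq ι] (s : Finset ι) (f : ι → A) :
    D (∏ i ∈ s, f i) = ∑ i ∈ s, (∏ j ∈ s.erase i, f j) * D (f i) := by
  induction s using Finset.induction_on with
  | empty => simp
  | @insert a s ha ih =>
    rw [Finset.prod_insert ha, D.leibniz, Finset.sum_insert ha, Finset.erase_insert ha,
      smul_eq_mul, smul_eq_mul, ih, Finset.mul_sum, add_comm]
    congr 1
    refine Finset.sum_congr rfl fun i hi => ?_
    rw [Finset.erase_insert_of_ne (ne_of_mem_of_not_mem hi ha).symm,
      Finset.prod_insert fun h => ha (Finset.mem_of_mem_erase h)]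
    ring

theorem map_det_s1 {n : Type*} [DecidableEq n] [Fintype n] (M : Matrix n n A) :
    D M.det = ∑ j, (M.updateCol j fun i => D (M i j)).det := by
  simp only [Matrix.det_apply, map_sum]
  rw [Finset.sum_comm]
  refine Finset.sum_congr rfl fun σ _ => ?_
  rw [map_zsmul_unit, map_finset_prod, Finset.smul_sum]
  refine Finset.sum_congr rfl fun j _ => ?_
  rw [← Finset.mul_prod_erase _ _ (Finset.mem_univ j), Matrix.updateCol_self, mul_comm]
  congr 2
  exact Finset.prod_congr rfl fun i hi => (Matrix.updateCol_ne (Finset.ne_of_mem_erase hi)).symm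

theorem map_det_of_map_eq_mul {n : Type*} [DecidableEq n] [Fintype n] {M B : Matrix n n A}
    (h : M.map D = M * B) : D M.det = B.trace * M.det := by
  have hcol : ∀ j, (fun i => D (M i j)) = fun i => ∑ l, B l j • M i l := fun j =>
    funext fun i => by
      simpa [Matrix.mul_apply, mul_comm] using congr_fun₂ h i j
  simp only [map_det_s1, hcol, Matrix.det_updateCol_sum]
  simp only [smul_eq_mul, Matrix.trace, Matrix.diag, Finset.sum_mul]

end Derivation

section Frobenius

variable {G : Type*} [Group G] [Fintype G]

noncomputable def frobeniusDerivation (g : G) :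
    Derivation ℂ (MvPolynomial G ℂ) (MvPolynomial G ℂ) :=
  ∑ h : G, (X (h * g⁻¹) : MvPolynomial G ℂ) • pderiv h

theorem Delta_eq_frobeniusDerivation (g : G) (f : MvPolynomial G ℂ) :
    Delta g f = frobeniusDerivation g f := by
  rw [frobeniusDerivation, ← Derivation.coeFnAddMonoidHom_apply, map_sum, Finset.sum_apply]
  rfl

theorem frobeniusDerivation_X [DecidableEq G] (g h : G) :
    frobeniusDerivation g (X h) = X (h * g⁻¹) := by
  simp [← Delta_eq_frobeniusDerivation, Delta, pderiv_X, Pi.single_apply]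

theorem repMatrix_map_frobeniusDerivation [DecidableEq G] {d : ℕ}
    (φ : G →* Matrix (Fin d) (Fin d) ℂ) (g : G) :
    (repMatrix φ).map (frobeniusDerivation g) = repMatrix φ * (φ g).map C :=
  calc (repMatrix φ).map (frobeniusDerivation g)
      _ = ∑ h, (X (h * g⁻¹) : MvPolynomial G ℂ) • (φ h).map C := by
        ext i j : 2
        simp [repMatrix, Matrix.sum_apply, frobeniusDerivation_X, mul_comm]
      _ = ∑ h, (X h : MvPolynomial G ℂ) • (φ (h * g)).map C :=
        (Fintype.sum_equiv (Equiv.mulRight g) _ _ fun h => by simp).symm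
      _ = repMatrix φ * (φ g).map C := by
        simp only [repMatrix, Finset.sum_mul, map_mul, Matrix.map_mul, smul_mul_assoc]

end Frobenius

theorem frobenius_Deltag {G : Type*} [Group G] [Fintype G] [DecidableEq G] {d : ℕ}
    (φ : G →* Matrix (Fin d) (Fin d) ℂ) (g : G) :
    Delta g (repMatrix φ).det = C ((φ g).trace) * (repMatrix φ).det := by
  rw [Delta_eq_frobeniusDerivation, (frobeniusDerivation g).map_det_of_map_eq_mul
    (repMatrix_map_frobeniusDerivation φ g), AddMonoidHom.map_trace]
end

section
/- Let G be a finite group of order n with identity g₁. Then for every g ∈ G with g ≠ g₁, we have Δ_g Θ_G = 0, where Δ_g := Σ_{h∈G} x_{hg⁻¹} ∂/∂x_h and Θ_G is the group determinant. -/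
open MvPolynomial

/-- The group determinant `Θ_G = det (x_{g h⁻¹})_{g,h ∈ G}`. -/
noncomputable def groupDet (G : Type*) [Group G] [Fintype G] [DecidableEq G] :
    MvPolynomial G ℂ :=
  Matrix.det (Matrix.of fun g h : G => (X (g * h⁻¹) : MvPolynomial G ℂ))

/-!
`Δ_g` is a derivation with `Δ_g x_k = x_{k g⁻¹}`, so it sends the entry `x_{a b⁻¹}` of the group
matrix to `x_{a (g b)⁻¹}`, the entry in column `g b`. Differentiating the determinant column by
column, `Δ_g Θ_G` is a sum of determinants in which column `b` is replaced by column `g b ≠ b`;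
each has two equal columns and vanishes.
-/

open Finset

namespace Derivation

variable {R A M : Type*} [CommSemiring R] [CommSemiring A] [Algebra R A] [AddCommMonoid M]
  [Module A M] [Module R M]

theorem map_prod {ι : Type*} [DecidableEq ι] (D : Derivation R A M) (s : Finset ι)
    (f : ι → A) : D (∏ i ∈ s, f i) = ∑ i ∈ s, (∏ j ∈ s.erase i, f j) • D (f i) := by
  induction s using Finset.induction_on with
  | empty => simp
  | insert a s ha ih =>
    rw [prod_insert ha, leibniz, ih, sum_insert ha, erase_insert ha, smul_sum, add_comm]
    congr 1
    refine sum_congr rfl fun i hi => ?_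
    have hia : a ≠ i := fun h => ha (h ▸ hi)
    rw [erase_insert_of_ne hia, prod_insert fun h => ha (mem_of_mem_erase h), mul_smul]

end Derivation

theorem Derivation.map_det_s3 {R A n : Type*} [CommSemiring R] [CommRing A] [Algebra R A]
    [Fintype n] [DecidableEq n] (D : Derivation R A A) (M : Matrix n n A) :
    D M.det = ∑ j, (M.updateCol j fun i => D (M i j)).det := by
  simp_rw [Matrix.det_apply, map_sum]
  rw [sum_comm]
  refine sum_congr rfl fun σ _ => ?_
  rw [Units.smul_def, map_zsmul, D.map_prod, smul_sum]
  refine sum_congr rfl fun j _ => ?_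
  rw [Units.smul_def, ← mul_prod_erase _ _ (mem_univ j), smul_eq_mul, mul_comm]
  simp only [Matrix.updateCol_self]
  congr 2
  refine prod_congr rfl fun i hi => ?_
  rw [Matrix.updateCol_ne (ne_of_mem_erase hi)]

section GroupDeterminant

variable {G : Type*} [Group G] [Fintype G]

noncomputable def deltaDerivation (g : G) :
    Derivation ℂ (MvPolynomial G ℂ) (MvPolynomial G ℂ) :=
  ∑ h, (X (h * g⁻¹) : MvPolynomial G ℂ) • pderiv h

theorem Delta_eq_deltaDerivation (g : G) (f : MvPolynomial G ℂ) :
    Delta g f = deltaDerivation g f := by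
  rw [deltaDerivation, ← Derivation.coeFnAddMonoidHom_apply, map_sum, Finset.sum_apply]
  rfl

theorem deltaDerivation_X [DecidableEq G] (g k : G) :
    deltaDerivation g (X k) = X (k * g⁻¹) := by
  rw [← Delta_eq_deltaDerivation, Delta, sum_eq_single k]
  · simp
  · intro h _ hk
    simp [pderiv_X, hk]
  · simp

end GroupDeterminant

theorem Delta_groupDet_eq_zero {G : Type*} [Group G] [Fintype G] [DecidableEq G]
    (g : G) (hg : g ≠ 1) : Delta g (groupDet G) = 0 := by
  rw [Delta_eq_deltaDerivation, groupDet, Derivation.map_det_s3]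
  refine sum_eq_zero fun b _ => ?_
  have hcol : ∀ a : G, deltaDerivation g (X (a * b⁻¹)) = X (a * (g * b)⁻¹) := fun a => by
    rw [deltaDerivation_X, mul_inv_rev, mul_assoc]
  simp only [Matrix.of_apply, hcol]
  exact Matrix.det_updateCol_eq_zero (by simpa using hg)
end

section
/- Let G be a finite group with irreducible complex representations φ₁,…,φ_r of degrees d₁,…,d_r (one from each equivalence class), and set y_i := det(Σ_{h∈G} φ_i(h) x_h). Then the group determinant factorizes as Θ_G(x_g) = Π_{i=1}^r y_i^{d_i} (Frobenius determinant theorem). -/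
open MvPolynomial

/-- A matrix representation is irreducible: the space is nonzero and the only invariant
subspaces are `⊥` and `⊤`. -/
def MatRepIrreducible {G : Type*} [Group G] {d : ℕ}
    (φ : G →* Matrix (Fin d) (Fin d) ℂ) : Prop :=
  0 < d ∧ ∀ W : Submodule ℂ (Fin d → ℂ),
    (∀ g : G, ∀ v ∈ W, (φ g).mulVec v ∈ W) → W = ⊥ ∨ W = ⊤

/-- Equivalence of two matrix representations. -/
def MatRepEquiv {G : Type*} [Group G] {d₁ d₂ : ℕ}
    (φ : G →* Matrix (Fin d₁) (Fin d₁) ℂ) (ψ : G →* Matrix (Fin d₂) (Fin d₂) ℂ) : Prop :=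
  ∃ e : (Fin d₁ → ℂ) ≃ₗ[ℂ] (Fin d₂ → ℂ),
    ∀ (g : G) (v : Fin d₁ → ℂ), e ((φ g).mulVec v) = (ψ g).mulVec (e v)

/-!
In the standard basis of `G → ℂ` the left regular representation `ρ` acts by the permutation
matrices `(δ_{x, g y})`, so `Θ_G = det (∑ g, x_g ρ(g))` is the determinant of an operator over
`ℂ[x_g]` and may be computed in any basis. By Maschke's theorem `ρ` is a direct sum of
irreducibles, each equivalent to some `φ i`; in an adapted basis `∑ g, x_g ρ(g)` is block diagonal
with blocks `∑ g, x_g φ_i(g)`, so `Θ_G = ∏ i, y_i ^ m_i` with `m_i` the multiplicity of `φ i`.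
Schur's lemma gives `m_i = dim Hom_G(ρ, φ i)`, and evaluation at `δ_1` identifies
`Hom_G(ρ, φ i)` with `ℂ^{d_i}`, so `m_i = d_i`.
-/

open Matrix Module Representation

noncomputable section

theorem Matrix.det_blockDiagonal' {R ι : Type*} [CommRing R] [Fintype ι] [DecidableEq ι]
    {m : ι → Type*} [∀ i, Fintype (m i)] [∀ i, DecidableEq (m i)]
    (M : ∀ i, Matrix (m i) (m i) R) :
    (blockDiagonal' M).det = ∏ i, (M i).det := by
  let : LinearOrder ι := LinearOrder.lift' _ (Fintype.equivFin ι).injective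
  rw [(blockTriangular_blockDiagonal' M).det_fintype]
  refine Finset.prod_congr rfl fun i _ => ?_
  have : (blockDiagonal' M).toSquareBlock Sigma.fst i =
      (M i).submatrix (Equiv.sigmaSubtype i) (Equiv.sigmaSubtype i) := by
    ext ⟨⟨j, a⟩, hj⟩ ⟨⟨j', b⟩, hj'⟩
    dsimp only at hj hj'
    subst hj hj'
    simp [toSquareBlock_def, Equiv.sigmaSubtype]
  rw [this, det_submatrix_equiv_self]

section ToMatrix

variable {k : Type*} [CommSemiring k]

theorem LinearMap.toMatrix_piMap {ι : Type*} [Fintype ι] [DecidableEq ι] {n : ι → Type*}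
    [∀ i, Fintype (n i)] [∀ i, DecidableEq (n i)] {M : ι → Type*} [∀ i, AddCommMonoid (M i)]
    [∀ i, Module k (M i)] (b : ∀ i, Basis (n i) k (M i)) (f : ∀ i, M i →ₗ[k] M i) :
    LinearMap.toMatrix (Pi.basis b) (Pi.basis b) (LinearMap.piMap f) =
      blockDiagonal' fun i => LinearMap.toMatrix (b i) (b i) (f i) := by
  ext ⟨i, a⟩ ⟨j, c⟩
  obtain rfl | h := eq_or_ne i j
  · simp [LinearMap.toMatrix_apply]
  · simp [LinearMap.toMatrix_apply, blockDiagonal'_apply_ne _ _ _ h, h]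

theorem LinearMap.toMatrix_map_conj {n V V' : Type*} [Fintype n] [DecidableEq n]
    [AddCommMonoid V] [Module k V] [AddCommMonoid V'] [Module k V'] (b : Basis n k V)
    (e : V ≃ₗ[k] V') (f : V →ₗ[k] V) :
    LinearMap.toMatrix (b.map e) (b.map e) (e.conj f) = LinearMap.toMatrix b b f := by
  ext i j
  simp [LinearMap.toMatrix_apply]

end ToMatrix

theorem LinearMap.det_sum_smul_baseChange {ι n R S M : Type*} [Fintype ι] [Fintype n]
    [DecidableEq n] [CommRing R] [CommRing S] [Algebra R S] [AddCommGroup M] [Module R M]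
    (b : Basis n R M) (x : ι → S) (f : ι → M →ₗ[R] M) :
    LinearMap.det (∑ i, x i • (f i).baseChange S) =
      (∑ i, x i • (LinearMap.toMatrix b b (f i)).map (algebraMap R S)).det := by
  simp [← LinearMap.det_toMatrix (Algebra.TensorProduct.basis S b), map_sum,
    LinearMap.toMatrix_baseChange]

namespace Representation

section Pi

variable {k G ι : Type*} [CommSemiring k] [Monoid G] {V : ι → Type*}
  [∀ i, AddCommMonoid (V i)] [∀ i, Module k (V i)]

def ofMatrix {n : Type*} [Fintype n] [DecidableEq n] (φ : G →* Matrix n n k) :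
    Representation k G (n → k) :=
  (Matrix.toLinAlgEquiv' : Matrix n n k ≃ₐ[k] Module.End k (n → k)).toMonoidHom.comp φ

@[simp]
lemma ofMatrix_apply {n : Type*} [Fintype n] [DecidableEq n] (φ : G →* Matrix n n k) (g : G)
    (v : n → k) : ofMatrix φ g v = φ g *ᵥ v :=
  Matrix.toLin'_apply _ _

lemma toMatrix_ofMatrix {n : Type*} [Fintype n] [DecidableEq n] (φ : G →* Matrix n n k)
    (g : G) : LinearMap.toMatrix (Pi.basisFun k n) (Pi.basisFun k n) (ofMatrix φ g) = φ g := by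
  rw [LinearMap.toMatrix_eq_toMatrix']
  exact LinearMap.toMatrix'_toLin' _

def pi (ρ : ∀ i, Representation k G (V i)) : Representation k G (∀ i, V i) where
  toFun g := LinearMap.piMap fun i => ρ i g
  map_one' := by ext; simp
  map_mul' g h := by ext; simp

@[simp]
lemma pi_apply (ρ : ∀ i, Representation k G (V i)) (g : G) (v : ∀ i, V i) (i : ι) :
    pi ρ g v i = ρ i g (v i) := rfl

variable {W : Type*} [AddCommMonoid W] [Module k W] (ρ : ∀ i, Representation k G (V i))
  (σ : Representation k G W)

def piProj (i : ι) : IntertwiningMap (pi ρ) (ρ i) :=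
  ⟨LinearMap.proj i, fun _ => rfl⟩

def piSingle [DecidableEq ι] (i : ι) : IntertwiningMap (ρ i) (pi ρ) :=
  ⟨LinearMap.single k V i, fun g => by
    ext v j
    obtain rfl | hj := eq_or_ne j i <;> simp [*]⟩

@[simp]
lemma piProj_apply (i : ι) (v : ∀ i, V i) : piProj ρ i v = v i := rfl

@[simp]
lemma piSingle_apply [DecidableEq ι] (i : ι) (v : V i) : piSingle ρ i v = Pi.single i v := rfl

def intertwiningMapPiEquiv [Fintype ι] [DecidableEq ι] :
    IntertwiningMap (pi ρ) σ ≃ₗ[k] ∀ i, IntertwiningMap (ρ i) σ where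
  toFun f i := f.comp (piSingle ρ i)
  invFun f := ∑ i, (f i).comp (piProj ρ i)
  map_add' f f' := by ext; simp
  map_smul' c f := by ext; simp
  left_inv f := by
    ext i v
    simp only [LinearMap.coe_comp, IntertwiningMap.coe_toLinearMap, LinearMap.coe_single,
      Function.comp_apply, IntertwiningMap.sum_apply, IntertwiningMap.comp_apply, piProj_apply,
      piSingle_apply]
    rw [Finset.sum_eq_single i (fun j _ hj => by simp [hj]) (by simp), Pi.single_eq_same]
  right_inv f := by
    ext i v
    simp only [IntertwiningMap.comp_toLinearMap, LinearMap.coe_comp,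
      IntertwiningMap.coe_toLinearMap, Function.comp_apply, IntertwiningMap.sum_apply,
      IntertwiningMap.comp_apply, piProj_apply, piSingle_apply]
    rw [Finset.sum_eq_single i (fun j _ hj => by simp [hj]) (by simp), Pi.single_eq_same]

end Pi

lemma finrank_intertwiningMap_pi {k G ι : Type*} [Field k] [Monoid G] [Fintype ι]
    [DecidableEq ι] {V : ι → Type*} [∀ i, AddCommGroup (V i)] [∀ i, Module k (V i)]
    [∀ i, FiniteDimensional k (V i)] {W : Type*} [AddCommGroup W] [Module k W]
    [FiniteDimensional k W] (ρ : ∀ i, Representation k G (V i)) (σ : Representation k G W) :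
    finrank k (IntertwiningMap (pi ρ) σ) = ∑ i, finrank k (IntertwiningMap (ρ i) σ) := by
  rw [(intertwiningMapPiEquiv ρ σ).finrank_eq, Module.finrank_pi_fintype]

def Equiv.intertwiningMapCongrLeft {k G V V' W : Type*} [CommSemiring k] [Monoid G]
    [AddCommMonoid V] [Module k V] [AddCommMonoid V'] [Module k V'] [AddCommMonoid W]
    [Module k W] {ρ : Representation k G V} {ρ' : Representation k G V'} (e : ρ.Equiv ρ')
    (σ : Representation k G W) :
    IntertwiningMap ρ' σ ≃ₗ[k] IntertwiningMap ρ σ where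
  toFun f := f.comp e.toIntertwiningMap
  invFun f := f.comp e.symm.toIntertwiningMap
  map_add' f f' := by ext; simp
  map_smul' c f := by ext; simp
  left_inv f := by ext; simp
  right_inv f := by ext; simp

section Regular

variable (k G : Type*) [CommSemiring k] [Group G]

-- This is `TannakaDuality.FiniteGroup.leftRegular`, which needs `k` and `G` in one universe.
def funLeftRegular : Representation k G (G → k) where
  toFun g := LinearMap.funLeft k k (g⁻¹ * ·)
  map_one' := by ext; simp
  map_mul' g h := by ext; simp [mul_assoc]

variable {k G}

@[simp]
lemma funLeftRegular_apply (g : G) (v : G → k) (x : G) :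
    funLeftRegular k G g v x = v (g⁻¹ * x) :=
  rfl

lemma funLeftRegular_single [DecidableEq G] (g : G) :
    funLeftRegular k G g (Pi.single 1 1) = Pi.single g 1 := by
  ext x
  simp [Pi.single_apply, inv_mul_eq_one, eq_comm]

def funLeftRegularHomEquiv [Fintype G] [DecidableEq G] {W : Type*} [AddCommMonoid W]
    [Module k W] (σ : Representation k G W) :
    IntertwiningMap (funLeftRegular k G) σ ≃ₗ[k] W where
  toFun f := f (Pi.single 1 1)
  invFun w := ⟨∑ g, (LinearMap.proj g).smulRight (σ g w), fun h => by
    ext v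
    simp [Pi.single_apply, inv_mul_eq_iff_eq_mul, map_mul]⟩
  map_add' f f' := rfl
  map_smul' c f := rfl
  left_inv f := by
    ext v
    simp [← funLeftRegular_single v, f.isIntertwining, Pi.single_apply, inv_mul_eq_one]
  right_inv w := by simp [Pi.single_apply]

end Regular

section Basis

variable {k G V : Type*} [CommRing k] [Monoid G] [AddCommGroup V] [Module k V] {n : Type*}
  [Fintype n] [DecidableEq n]

def toMatrixHom (ρ : Representation k G V) (b : Basis n k V) : G →* Matrix n n k :=
  (LinearMap.toMatrixAlgEquiv b : Module.End k V ≃ₐ[k] Matrix n n k).toMonoidHom.comp ρ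

def ofMatrixToMatrixHomEquiv (ρ : Representation k G V) (b : Basis n k V) :
    (ofMatrix (ρ.toMatrixHom b)).Equiv ρ :=
  .mk b.equivFun.symm fun g => LinearMap.ext fun v => by
    apply b.equivFun.injective
    rw [LinearMap.comp_apply, LinearMap.comp_apply, LinearEquiv.coe_coe,
      LinearEquiv.apply_symm_apply, ofMatrix_apply, Basis.equivFun_apply,
      ← LinearMap.toMatrix_mulVec_repr b b]
    exact congrArg _ (b.equivFun.apply_symm_apply v).symm

end Basis

lemma Equiv.toMatrix_pi_ofMatrix {k G ι V : Type*} [CommRing k] [Monoid G] [Fintype ι]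
    [DecidableEq ι] [AddCommGroup V] [Module k V] {n : ι → Type*} [∀ i, Fintype (n i)]
    [∀ i, DecidableEq (n i)] {ψ : ∀ i, G →* Matrix (n i) (n i) k} {ρ : Representation k G V}
    (e : (pi fun i => ofMatrix (ψ i)).Equiv ρ) (g : G) :
    LinearMap.toMatrix ((Pi.basis fun i => Pi.basisFun k (n i)).map e.toLinearEquiv)
      ((Pi.basis fun i => Pi.basisFun k (n i)).map e.toLinearEquiv) (ρ g) =
      blockDiagonal' fun i => ψ i g := by
  rw [← e.conj_apply_self g, LinearMap.toMatrix_map_conj]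
  exact (LinearMap.toMatrix_piMap _ _).trans (by simp_rw [toMatrix_ofMatrix])

theorem IntertwiningMap.isIrreducible_of_isAtom_range {k G V W : Type*} [Field k] [Monoid G]
    [AddCommGroup V] [Module k V] [AddCommGroup W] [Module k W] {ρ : Representation k G V}
    {σ : Representation k G W} {f : IntertwiningMap σ ρ} (hf : Function.Injective f)
    (h : IsAtom f.range) : IsIrreducible σ := by
  refine { exists_pair_ne := ⟨⊥, ⊤, fun h' => h.1 ?_⟩, eq_bot_or_eq_top := fun Z => ?_ }
  · refine Subrepresentation.ext (LinearMap.range_eq_bot.mpr (LinearMap.ext fun w => ?_))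
    have hw : w ∈ (⊥ : Subrepresentation σ) := h' ▸ Submodule.mem_top
    rw [(Submodule.mem_bot k).mp hw, LinearMap.zero_apply, map_zero]
  · let Z' : Subrepresentation ρ := ⟨Z.toSubmodule.map f.toLinearMap, by
      rintro g _ ⟨v, hv, rfl⟩
      exact ⟨σ g v, Z.apply_mem_toSubmodule g hv, LinearMap.congr_fun (f.isIntertwining' g) v⟩⟩
    have hZ' : Z' ≤ f.range := fun _ ⟨v, _, hv⟩ => ⟨v, hv⟩
    refine (h.le_iff.mp hZ').imp (fun h0 => Subrepresentation.ext ?_)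
      (fun h0 => Subrepresentation.ext ?_)
    · apply Submodule.map_injective_of_injective hf
      exact (congrArg Subrepresentation.toSubmodule h0).trans (Submodule.map_bot _).symm
    · apply Submodule.map_injective_of_injective hf
      exact (congrArg Subrepresentation.toSubmodule h0).trans (LinearMap.range_eq_map _)

end Representation

section MatRep

variable {G : Type*} [Group G]

theorem matRepIrreducible_iff_isIrreducible {d : ℕ} (φ : G →* Matrix (Fin d) (Fin d) ℂ) :
    MatRepIrreducible φ ↔ IsIrreducible (ofMatrix φ) := by
  constructor
  · rintro ⟨hd, h⟩
    have : Nonempty (Fin d) := ⟨⟨0, hd⟩⟩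
    refine { exists_pair_ne := ⟨⊥, ⊤, fun h' => ?_⟩, eq_bot_or_eq_top := fun W => ?_ }
    · exact bot_ne_top (congrArg Subrepresentation.toSubmodule h')
    · refine (h W.toSubmodule fun g v hv => ?_).imp Subrepresentation.ext Subrepresentation.ext
      simpa using W.apply_mem_toSubmodule g hv
  · intro h
    refine ⟨Nat.pos_of_ne_zero fun hd => ?_, fun W hW => ?_⟩
    · subst hd
      exact bot_ne_top (Subrepresentation.ext (Subsingleton.elim _ _) :
        (⊥ : Subrepresentation (ofMatrix φ)) = ⊤)
    · let W' : Subrepresentation (ofMatrix φ) := ⟨W, fun g v hv => by simpa using hW g v hv⟩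
      exact (eq_bot_or_eq_top W').imp (congrArg Subrepresentation.toSubmodule)
        (congrArg Subrepresentation.toSubmodule)

theorem matRepEquiv_iff_nonempty_equiv {d₁ d₂ : ℕ} (φ : G →* Matrix (Fin d₁) (Fin d₁) ℂ)
    (ψ : G →* Matrix (Fin d₂) (Fin d₂) ℂ) :
    MatRepEquiv φ ψ ↔ Nonempty ((ofMatrix φ).Equiv (ofMatrix ψ)) := by
  constructor
  · rintro ⟨e, he⟩
    exact ⟨.mk e fun g => LinearMap.ext fun v => by simpa using he g v⟩
  · rintro ⟨e⟩
    exact ⟨e.toLinearEquiv, fun g v => by simpa using LinearMap.congr_fun (e.isIntertwining' g) v⟩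

end MatRep

section Decomposition

variable {G : Type*} [Group G] {r : ℕ} {d : Fin r → ℕ}
  (φ : ∀ i, G →* Matrix (Fin (d i)) (Fin (d i)) ℂ)

theorem finrank_intertwiningMap_ofMatrix (hirr : ∀ i, MatRepIrreducible (φ i))
    (hdist : ∀ i j, MatRepEquiv (φ i) (φ j) → i = j) (j i : Fin r) :
    finrank ℂ (IntertwiningMap (ofMatrix (φ j)) (ofMatrix (φ i))) = if j = i then 1 else 0 := by
  have := fun i => (matRepIrreducible_iff_isIrreducible (φ i)).mp (hirr i)
  split_ifs with h
  · subst h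
    exact IsIrreducible.finrank_intertwiningMap_self _
  · have : IsEmpty ((ofMatrix (φ j)).Equiv (ofMatrix (φ i))) :=
      ⟨fun e => h (hdist j i ((matRepEquiv_iff_nonempty_equiv _ _).mpr ⟨e⟩))⟩
    exact Module.finrank_zero_of_subsingleton

variable {V : Type*} [AddCommGroup V] [Module ℂ V] {ρ : Representation ℂ G V}

def IsDirectSumOfCopies (W : Subrepresentation ρ) : Prop :=
  ∃ (ι : Type) (_ : Fintype ι) (ind : ι → Fin r)
    (f : IntertwiningMap (pi fun k => ofMatrix (φ (ind k))) ρ), Function.Injective f ∧ f.range = W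

theorem isDirectSumOfCopies_bot : IsDirectSumOfCopies φ (⊥ : Subrepresentation ρ) :=
  ⟨Empty, inferInstance, Empty.elim, 0, Function.injective_of_subsingleton _,
    Subrepresentation.ext LinearMap.range_zero⟩

theorem isDirectSumOfCopies_of_isAtom [FiniteDimensional ℂ V]
    (hcomplete : ∀ (m : ℕ) (ψ : G →* Matrix (Fin m) (Fin m) ℂ),
      MatRepIrreducible ψ → ∃ i, MatRepEquiv ψ (φ i))
    {W : Subrepresentation ρ} (hW : IsAtom W) : IsDirectSumOfCopies φ W := by
  let b := Module.finBasis ℂ W.toSubmodule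
  -- the matrix form of `W` in the basis `b`, embedded back into `ρ`
  let j : IntertwiningMap (ofMatrix (W.toRepresentation.toMatrixHom b)) ρ :=
    IntertwiningMap.comp
      (⟨W.toSubmodule.subtype, fun _ => rfl⟩ : IntertwiningMap W.toRepresentation ρ)
      (ofMatrixToMatrixHomEquiv _ b).toIntertwiningMap
  have hj : Function.Injective j :=
    Subtype.val_injective.comp (ofMatrixToMatrixHomEquiv W.toRepresentation b).injective
  have hjW : j.range = W := by
    ext v
    refine ⟨fun ⟨x, hx⟩ => hx ▸ (ofMatrixToMatrixHomEquiv W.toRepresentation b x).2,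
      fun hv => ?_⟩
    exact ⟨(ofMatrixToMatrixHomEquiv W.toRepresentation b).symm ⟨v, hv⟩, by simp [j]⟩
  obtain ⟨i, hi⟩ := hcomplete _ _ ((matRepIrreducible_iff_isIrreducible _).mpr
    (j.isIrreducible_of_isAtom_range hj (by rwa [hjW])))
  obtain ⟨e⟩ := (matRepEquiv_iff_nonempty_equiv _ _).mp hi
  refine ⟨Unit, inferInstance, fun _ => i, (j.comp e.symm.toIntertwiningMap).comp (piProj _ ()),
    (hj.comp e.symm.injective).comp fun x y h => funext fun _ => h, Eq.trans ?_ hjW⟩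
  ext v
  refine ⟨fun ⟨x, hx⟩ => ⟨e.symm (x ()), hx⟩, fun ⟨y, hy⟩ => ⟨fun _ => e y, ?_⟩⟩
  simpa [IntertwiningMap.comp_apply] using hy

theorem IsDirectSumOfCopies.sup {W₁ W₂ : Subrepresentation ρ} (h₁ : IsDirectSumOfCopies φ W₁)
    (h₂ : IsDirectSumOfCopies φ W₂) (hdisj : Disjoint W₁ W₂) :
    IsDirectSumOfCopies φ (W₁ ⊔ W₂) := by
  obtain ⟨ι₁, _, ind₁, f₁, hf₁, rfl⟩ := h₁
  obtain ⟨ι₂, _, ind₂, f₂, hf₂, rfl⟩ := h₂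
  let e : (∀ k, Fin (d (Sum.elim ind₁ ind₂ k)) → ℂ) ≃ₗ[ℂ]
      (∀ a, Fin (d (ind₁ a)) → ℂ) × (∀ b, Fin (d (ind₂ b)) → ℂ) :=
    LinearEquiv.sumPiEquivProdPi ℂ ι₁ ι₂ _
  let F := f₁.toLinearMap.coprod f₂.toLinearMap
  have hdisj' : Disjoint (LinearMap.range f₁.toLinearMap) (LinearMap.range f₂.toLinearMap) := by
    rw [disjoint_iff] at hdisj ⊢
    exact congrArg Subrepresentation.toSubmodule hdisj
  refine ⟨ι₁ ⊕ ι₂, inferInstance, Sum.elim ind₁ ind₂, ⟨F ∘ₗ e.toLinearMap, fun g => ?_⟩, ?_, ?_⟩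
  · ext x
    simp only [F, e, LinearMap.comp_apply, LinearMap.coprod_apply, map_add]
    exact congrArg₂ (· + ·) (LinearMap.congr_fun (f₁.isIntertwining' g) _)
      (LinearMap.congr_fun (f₂.isIntertwining' g) _)
  · have : LinearMap.ker F = ⊥ := by
      rw [LinearMap.ker_coprod_of_disjoint_range _ _ hdisj', LinearMap.ker_eq_bot.mpr hf₁,
        LinearMap.ker_eq_bot.mpr hf₂, Submodule.prod_bot]
    exact (LinearMap.ker_eq_bot.mp this).comp e.injective
  · refine Subrepresentation.ext ?_
    change LinearMap.range (F ∘ₗ e.toLinearMap) =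
      LinearMap.range f₁.toLinearMap ⊔ LinearMap.range f₂.toLinearMap
    rw [LinearMap.range_comp_of_range_eq_top _ e.range, LinearMap.range_coprod]

variable (ρ) in
theorem exists_equiv_pi_ofMatrix [Finite G] [FiniteDimensional ℂ V]
    (hcomplete : ∀ (m : ℕ) (ψ : G →* Matrix (Fin m) (Fin m) ℂ),
      MatRepIrreducible ψ → ∃ i, MatRepEquiv ψ (φ i)) :
    ∃ (ι : Type) (_ : Fintype ι) (ind : ι → Fin r),
      Nonempty ((pi fun k => ofMatrix (φ (ind k))).Equiv ρ) := by
  have hmono : StrictMono (Subrepresentation.toSubmodule : Subrepresentation ρ → _) :=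
    fun _ _ h => h
  have := hmono.wellFoundedLT
  have := hmono.wellFoundedGT
  have : IsAtomic (Subrepresentation ρ) := isAtomic_of_orderBot_wellFounded_lt wellFounded_lt
  obtain ⟨M, hM⟩ := exists_maximal_of_wellFoundedGT (IsDirectSumOfCopies (ρ := ρ) φ)
    ⟨⊥, isDirectSumOfCopies_bot φ⟩
  -- By Maschke, a proper `M` has a nonzero complement, and adjoining an irreducible
  -- subrepresentation of that complement would contradict maximality.
  obtain rfl : M = ⊤ := by
    by_contra hM_top
    obtain ⟨C, hC⟩ := exists_isCompl M
    obtain ⟨A, hA, hAC⟩ := (eq_bot_or_exists_atom_le C).resolve_left fun h =>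
      hM_top (by simpa [h] using hC.sup_eq_top)
    have hdisj : Disjoint M A := hC.disjoint.mono_right hAC
    have hAM : A ≤ M := le_sup_right.trans
      (hM.2 (hM.1.sup φ (isDirectSumOfCopies_of_isAtom φ hcomplete hA) hdisj) le_sup_left)
    exact hA.1 (disjoint_self.mp (hdisj.mono_left hAM))
  obtain ⟨ι, _, ind, f, hf, hrange⟩ := hM.1
  exact ⟨ι, inferInstance, ind, ⟨f.ofBijective ⟨hf, fun v =>
    (hrange ▸ Submodule.mem_top : v ∈ f.range)⟩⟩⟩

theorem card_fiber_eq_of_equiv_funLeftRegular [Fintype G] [DecidableEq G]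
    (hirr : ∀ i, MatRepIrreducible (φ i)) (hdist : ∀ i j, MatRepEquiv (φ i) (φ j) → i = j)
    {ι : Type*} [Fintype ι] (ind : ι → Fin r)
    (e : (pi fun k => ofMatrix (φ (ind k))).Equiv (funLeftRegular ℂ G)) (i : Fin r) :
    Fintype.card {k // ind k = i} = d i := by
  classical
  calc Fintype.card {k // ind k = i}
      = ∑ k, finrank ℂ (IntertwiningMap (ofMatrix (φ (ind k))) (ofMatrix (φ i))) := by
        rw [Fintype.card_subtype, Finset.card_filter]
        simp [finrank_intertwiningMap_ofMatrix φ hirr hdist]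
    _ = finrank ℂ (IntertwiningMap (funLeftRegular ℂ G) (ofMatrix (φ i))) := by
        rw [← finrank_intertwiningMap_pi, (e.intertwiningMapCongrLeft _).finrank_eq]
    _ = d i := by rw [(funLeftRegularHomEquiv _).finrank_eq, Module.finrank_fin_fun]

end Decomposition

theorem groupDet_eq_det_baseChange (G : Type*) [Group G] [Fintype G] [DecidableEq G] :
    groupDet G = LinearMap.det
      (∑ g, (X g : MvPolynomial G ℂ) • (funLeftRegular ℂ G g).baseChange (MvPolynomial G ℂ)) := by
  rw [LinearMap.det_sum_smul_baseChange (Pi.basisFun ℂ G), groupDet]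
  congr 1
  refine Matrix.ext fun a b => ?_
  simp [Matrix.sum_apply, Pi.single_apply, inv_mul_eq_iff_eq_mul, ← mul_inv_eq_iff_eq_mul]

theorem blockDiagonal'_repMatrix {G ι : Type*} [Group G] [Fintype G] [DecidableEq ι]
    {m : ι → ℕ} (ψ : ∀ k, G →* Matrix (Fin (m k)) (Fin (m k)) ℂ) :
    blockDiagonal' (fun k => repMatrix (ψ k)) =
      ∑ g, (X g : MvPolynomial G ℂ) • (blockDiagonal' fun k => ψ k g).map C := by
  refine Matrix.ext fun ⟨k, a⟩ ⟨k', b⟩ => ?_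
  by_cases h : k = k'
  · subst h
    simp [repMatrix, Matrix.sum_apply]
  · simp [Matrix.sum_apply, blockDiagonal'_apply_ne _ _ _ h]

end

/-- Frobenius determinant theorem: `Θ_G = ∏ i, y_i ^ d_i`. -/
theorem frobenius_determinant {G : Type*} [Group G] [Fintype G] [DecidableEq G]
    {r : ℕ} (d : Fin r → ℕ) (φ : ∀ i, G →* Matrix (Fin (d i)) (Fin (d i)) ℂ)
    (hirr : ∀ i, MatRepIrreducible (φ i))
    (hdist : ∀ i j, MatRepEquiv (φ i) (φ j) → i = j)
    (hcomplete : ∀ (m : ℕ) (ψ : G →* Matrix (Fin m) (Fin m) ℂ),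
      MatRepIrreducible ψ → ∃ i, MatRepEquiv ψ (φ i)) :
    groupDet G = ∏ i, (repMatrix (φ i)).det ^ (d i) := by
  obtain ⟨ι, _, ind, ⟨e⟩⟩ := exists_equiv_pi_ofMatrix φ (funLeftRegular ℂ G) hcomplete
  classical
  rw [groupDet_eq_det_baseChange,
    LinearMap.det_sum_smul_baseChange ((Pi.basis fun k => Pi.basisFun ℂ _).map e.toLinearEquiv)]
  simp_rw [e.toMatrix_pi_ofMatrix, MvPolynomial.algebraMap_eq]
  rw [← blockDiagonal'_repMatrix, Matrix.det_blockDiagonal',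
    ← Fintype.prod_fiberwise' ind (fun i => (repMatrix (φ i)).det)]
  simp [card_fiber_eq_of_equiv_funLeftRegular φ hirr hdist ind e]
end

section
/- Let G be a finite abelian group, H a subgroup, T a set of coset representatives of H in G, and χ a character of G. Define y_{tH}^χ := Σ_{h∈H} χ(th) x_{th}. Then Π_{χ'∈Ĝ_H} y_{χχ'} = Θ_{G/H}(y_{tH}^χ), where Ĝ_H := {χ'∈Ĝ : χ'(h)=1 for all h∈H}, y_ψ := Σ_{g∈G} ψ(g)x_g, and Θ_{G/H} is the group determinant of G/H evaluated at the variables y_{tH}^χ. -/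
/-!
The characters of `G` trivial on `H` are exactly the characters `ψ ∘ π` with `ψ` a character
of `G ⧸ H`, and grouping the terms of `y_{χ · ψ∘π}` by cosets gives `∑_{q ∈ G ⧸ H} ψ(q) z_q`.
So the claim is the Frobenius determinant formula for the abelian group `G ⧸ H`, applied to the
`z_q`. That formula holds over any commutative algebra `R` over a field `K` with enough roots of
unity: each character `ψ` is an eigenvector of the group matrix `(w (a b⁻¹))_{a,b}` with
eigenvalue `∑_q ψ(q⁻¹) w_q`, and by Dedekind's independence of characters the character matrix
is invertible, so it diagonalises the group matrix.
-/

open MvPolynomial Finset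

section GroupDeterminant

variable {K R Q : Type*} [Field K] [CommRing R] [Algebra K R] [CommGroup Q] [Fintype Q]

theorem groupMatrix_mul_charMatrix {ι : Type*} [Fintype ι] [DecidableEq ι] (w : Q → R)
    (φ : ι → Q →* Kˣ) :
    Matrix.of (fun a b : Q => w (a * b⁻¹)) * Matrix.of (fun a i => algebraMap K R (φ i a)) =
      Matrix.of (fun a i => algebraMap K R (φ i a)) *
        Matrix.diagonal (fun i => ∑ q, algebraMap K R (φ i q⁻¹) * w q) := by
  ext a i
  rw [Matrix.mul_diagonal, Matrix.mul_apply, Matrix.of_apply, mul_sum]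
  refine Fintype.sum_equiv ((Equiv.inv Q).trans (Equiv.mulLeft a)) _ _ fun b => ?_
  have hφ : algebraMap K R (φ i a) * algebraMap K R (φ i (a * b⁻¹)⁻¹) =
      algebraMap K R (φ i b) := by
    rw [← map_mul, ← Units.val_mul, ← map_mul, mul_inv_rev, inv_inv, mul_comm b,
      mul_inv_cancel_left]
  simp only [Matrix.of_apply, Equiv.trans_apply, Equiv.inv_apply, Equiv.coe_mulLeft]
  rw [← hφ]
  ring

theorem isUnit_det_charMatrix [DecidableEq Q] (e : (Q →* Kˣ) ≃ Q) :
    IsUnit (Matrix.of fun a i => (e.symm i a : K)).det := by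
  rw [← Matrix.isUnit_iff_isUnit_det, ← Matrix.linearIndependent_cols_iff_isUnit]
  have hinj : Function.Injective fun i => (Units.coeHom K).comp (e.symm i) :=
    fun i j h => e.symm.injective (MonoidHom.ext fun a => Units.ext (DFunLike.congr_fun h a))
  exact (linearIndependent_monoidHom Q K).comp _ hinj

theorem det_groupMatrix [DecidableEq Q] [HasEnoughRootsOfUnity K (Monoid.exponent Q)]
    [Fintype (Q →* Kˣ)] (w : Q → R) :
    (Matrix.of fun a b : Q => w (a * b⁻¹)).det =
      ∏ ψ : Q →* Kˣ, ∑ q, algebraMap K R (ψ q) * w q := by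
  obtain ⟨e⟩ := CommGroup.monoidHom_mulEquiv_of_hasEnoughRootsOfUnity Q K
  have hV : IsUnit (Matrix.of fun a i => algebraMap K R (e.symm i a)).det := by
    have := (isUnit_det_charMatrix e.toEquiv).map (algebraMap K R)
    rwa [RingHom.map_det] at this
  have key := congrArg Matrix.det (groupMatrix_mul_charMatrix w fun i => e.symm i)
  rw [Matrix.det_mul, Matrix.det_mul, mul_comm, Matrix.det_diagonal] at key
  calc _ = ∏ i, ∑ q, algebraMap K R (e.symm i q⁻¹) * w q := hV.mul_left_cancel key
    _ = ∏ ψ : Q →* Kˣ, ∑ q, algebraMap K R (ψ q⁻¹) * w q :=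
      Fintype.prod_equiv e.symm.toEquiv _ _ fun _ => rfl
    _ = _ := Fintype.prod_equiv (Equiv.inv _) _ _ fun ψ => by simp

end GroupDeterminant

theorem prod_filter_forall_eq_one_eq_prod_quotient {G A β : Type*} [CommGroup G] [CommGroup A]
    [CommMonoid β] (H : Subgroup G) [Fintype (G →* A)] [Fintype (G ⧸ H →* A)]
    [DecidablePred fun χ : G →* A => ∀ h ∈ H, χ h = 1] (f : (G →* A) → β) :
    ∏ χ ∈ univ.filter (fun χ : G →* A => ∀ h ∈ H, χ h = 1), f χ =
      ∏ ψ : G ⧸ H →* A, f (ψ.comp (QuotientGroup.mk' H)) := by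
  classical
  rw [prod_subtype (p := (· ∈ (MonoidHom.domRestrictHom H A).ker)) _ fun χ => by
    simp [MonoidHom.domRestrict_eq_one_iff]]
  exact Fintype.prod_equiv (MonoidHom.domRestrictHomKerEquiv A H) _ _ fun χ =>
    congrArg f (MonoidHom.ext fun _ => rfl)

theorem sum_comp_mul_eq_sum_mul_sum_ite {ι κ R : Type*} [Fintype ι] [Fintype κ] [DecidableEq κ]
    [NonUnitalNonAssocSemiring R] (π : ι → κ) (c : κ → R) (f : ι → R) :
    ∑ i, c (π i) * f i = ∑ k, c k * ∑ i, if π i = k then f i else 0 := by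
  simp_rw [mul_sum, mul_ite, mul_zero]
  rw [sum_comm]
  simp

open scoped Classical in
theorem prod_coset_chars_eq_quotient_groupDet_general {G : Type*} [CommGroup G] [Fintype G]
    (H : Subgroup G) [Fintype (G ⧸ H)] [DecidableEq (G ⧸ H)]
    [Fintype (G →* ℂˣ)] (χ : G →* ℂˣ)
    -- the linear forms `y_ψ = ∑_{g ∈ G} ψ(g) x_g`
    (y : (G →* ℂˣ) → MvPolynomial G ℂ)
    (hy : ∀ ψ : G →* ℂˣ, y ψ = ∑ g : G, C ((ψ g : ℂ)) * X g)
    -- the linear forms `y_{tH}^χ`, indexed by the cosets `tH ∈ G/H`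
    (z : G ⧸ H → MvPolynomial G ℂ)
    (hz : ∀ q : G ⧸ H, z q =
      ∑ g : G, if (g : G ⧸ H) = q then C ((χ g : ℂ)) * X g else 0) :
    ∏ χ' ∈ Finset.univ.filter (fun χ' : G →* ℂˣ => ∀ h ∈ H, χ' h = 1), y (χ * χ') =
      Matrix.det (Matrix.of fun a b : G ⧸ H => z (a * b⁻¹)) := by
  have : NeZero (Monoid.exponent (G ⧸ H)) := ⟨Monoid.exponent_ne_zero_of_finite⟩
  let : Fintype (G ⧸ H →* ℂˣ) := Fintype.ofFinite _
  rw [prod_filter_forall_eq_one_eq_prod_quotient, det_groupMatrix (K := ℂ)]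
  refine prod_congr rfl fun ψ _ => ?_
  simp_rw [hy, hz, MvPolynomial.algebraMap_eq]
  refine (sum_congr rfl fun g _ => ?_).trans (sum_comp_mul_eq_sum_mul_sum_ite
    (fun g : G => (g : G ⧸ H)) (fun q => C (ψ q : ℂ)) fun g => C (χ g : ℂ) * X g)
  rw [MonoidHom.mul_apply, Units.val_mul, map_mul, MonoidHom.comp_apply, QuotientGroup.mk'_apply]
  ring

open scoped Classical in
/-- `∏_{χ' ∈ Ĝ_H} y_{χχ'} = Θ_{G/H}(y_{tH}^χ)`: the product of the linear forms attached
to the characters in the coset `χ Ĝ_H` is the group determinant of `G ⧸ H` evaluated at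
the linear forms `y_{tH}^χ = ∑_{h ∈ H} χ(th) x_{th}`. -/
theorem prod_coset_chars_eq_quotient_groupDet {G : Type*} [CommGroup G] [Fintype G]
    [DecidableEq G] (H : Subgroup G) [Fintype (G ⧸ H)] [DecidableEq (G ⧸ H)]
    [Fintype (G →* ℂˣ)] (χ : G →* ℂˣ)
    -- the linear forms `y_ψ = ∑_{g ∈ G} ψ(g) x_g`
    (y : (G →* ℂˣ) → MvPolynomial G ℂ)
    (hy : ∀ ψ : G →* ℂˣ, y ψ = ∑ g : G, C ((ψ g : ℂ)) * X g)
    -- the linear forms `y_{tH}^χ`, indexed by the cosets `tH ∈ G/H`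
    (z : G ⧸ H → MvPolynomial G ℂ)
    (hz : ∀ q : G ⧸ H, z q =
      ∑ g : G, if (g : G ⧸ H) = q then C ((χ g : ℂ)) * X g else 0) :
    ∏ χ' ∈ Finset.univ.filter (fun χ' : G →* ℂˣ => ∀ h ∈ H, χ' h = 1), y (χ * χ') =
      Matrix.det (Matrix.of fun a b : G ⧸ H => z (a * b⁻¹)) :=
  prod_coset_chars_eq_quotient_groupDet_general H χ y hy z hz
end
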